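/- Let 𝓛_δ : B_s → B_s and 𝓛_δ : B_ss → B_ss, δ ∈ [0, δ̄), be a family of nonlinear Markov operators, with 𝓛₀ linear and bounded on B_i for i ∈ {w, s, ss}, satisfying (SS1), (SS2), (SS3). Assume in addition: (LR1) the resolvent (Id − 𝓛₀)^{-1} := Σ_{i=0}^∞ 𝓛₀ⁱ is a bounded operator V_w → V_w; (LR2) with B̄_{2M} := {x ∈ B_s : ‖x‖_s ≤ 2M}, there is K ≥ 0 such that 𝓛₀ − 𝓛_δ is Kδ-Lipschitz from (B̄_{2M}, ‖·‖_s) to (B_w, ‖·‖_w) with (𝓛₀ − 𝓛_δ)(0) = 0, and there exists 𝓛̇h₀ ∈ V_w such that lim_{δ→0} ‖ ((𝓛_δ − 𝓛₀)/δ)(h₀) − 𝓛̇h₀ ‖_w = 0. Then the following linear response formula holds: lim_{δ→0} ‖ (h_δ − h₀)/δ − (Id − 𝓛₀)^{-1} 𝓛̇h₀ ‖_w = 0. -/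

import Mathlib

/-!
Put `x_δ = h_δ - h₀`. The fixed-point equations give `(Id - 𝓛₀) x_δ = 𝓛_δ h_δ - 𝓛₀ h_δ`, so
telescoping yields `x_δ = 𝓛₀ᴺ x_δ + ∑_{i<N} 𝓛₀ⁱ (𝓛_δ h_δ - 𝓛₀ h_δ)` for every `N`. By (SS1)
and (SS2) the first term is small in `‖·‖_s` uniformly in `δ` once `N` is large, and by (SS3)
the sum is `O(δ)` for fixed `N`; hence `‖h_δ - h₀‖_s → 0`. Dividing by `δ` and letting `N → ∞`
in `‖·‖_w` with (LR1) gives `x_δ / δ = (Id - 𝓛₀)⁻¹ u_δ` up to a `‖·‖_w`-null vector, where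
`u_δ = (𝓛_δ h_δ - 𝓛₀ h_δ) / δ`. By (LR2) `u_δ` is within `K' ‖h_δ - h₀‖_s` of
`(𝓛_δ - 𝓛₀) h₀ / δ`, so `u_δ → 𝓛̇h₀`, and the bounded resolvent carries this to
`x_δ / δ → (Id - 𝓛₀)⁻¹ 𝓛̇h₀`.
-/

open MeasureTheory Filter Finset Set Topology

theorem Module.End.geom_sum_apply_sub_self_apply {R M : Type*} [Ring R] [AddCommGroup M]
    [Module R M] (T : Module.End R M) (N : ℕ) (x : M) :
    (∑ i ∈ range N, T ^ i) (x - T x) = x - (T ^ N) x := by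
  simpa using congrArg (· x) (geom_sum_mul_neg T N)

theorem tendsto_zero_of_forall_le_add {ι : Type*} {l : Filter ι} {f : ι → ℝ} {b : ℕ → ℝ}
    {c : ℕ → ι → ℝ} (hf : ∀ᶠ i in l, 0 ≤ f i) (hb : Tendsto b atTop (𝓝 0))
    (hc : ∀ N, Tendsto (c N) l (𝓝 0)) (hle : ∀ N, ∀ᶠ i in l, f i ≤ b N + c N i) :
    Tendsto f l (𝓝 0) := by
  refine tendsto_order.2 ⟨fun a ha => hf.mono fun i hi => ha.trans_le hi, fun ε hε => ?_⟩
  obtain ⟨N, hN⟩ := (hb.eventually (gt_mem_nhds (half_pos hε))).exists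
  filter_upwards [hle N, (hc N).eventually (gt_mem_nhds (half_pos hε))] with i hi hci
  linarith

theorem Module.End.pow_apply_le_of_forall_apply_le {R E : Type*} [Semiring R]
    [AddCommMonoid E] [Module R E] {B : Submodule R E} {n : E → ℝ} {T : Module.End R E}
    (hT : ∀ x ∈ B, T x ∈ B) {C : ℝ} (hC : 0 ≤ C) (hTC : ∀ x ∈ B, n (T x) ≤ C * n x) (k : ℕ)
    {x : E} (hx : x ∈ B) :
    n ((T ^ k) x) ≤ C ^ k * n x := by
  induction k with
  | zero => simp
  | succ k ih =>
    rw [pow_succ', Module.End.mul_apply, pow_succ', mul_assoc]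
    exact (hTC _ (Module.End.pow_apply_mem_of_forall_mem k hT x hx)).trans
      (mul_le_mul_of_nonneg_left ih hC)

structure IsSeminormOn {E : Type*} [AddCommGroup E] [Module ℝ E] (B : Submodule ℝ E)
    (n : E → ℝ) : Prop where
  nonneg : ∀ x ∈ B, 0 ≤ n x
  add_le : ∀ x ∈ B, ∀ y ∈ B, n (x + y) ≤ n x + n y
  smul : ∀ (c : ℝ), ∀ x ∈ B, n (c • x) = |c| * n x

namespace IsSeminormOn

variable {E : Type*} [AddCommGroup E] [Module ℝ E] {B : Submodule ℝ E} {n : E → ℝ}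

theorem map_zero (hn : IsSeminormOn B n) : n 0 = 0 := by
  simpa using hn.smul 0 0 B.zero_mem

theorem map_neg (hn : IsSeminormOn B n) {x : E} (hx : x ∈ B) : n (-x) = n x := by
  simpa using hn.smul (-1) x hx

theorem map_sub_rev (hn : IsSeminormOn B n) {x y : E} (hx : x ∈ B) (hy : y ∈ B) :
    n (x - y) = n (y - x) := by
  rw [← neg_sub, hn.map_neg (B.sub_mem hy hx)]

theorem sub_le (hn : IsSeminormOn B n) {x y : E} (hx : x ∈ B) (hy : y ∈ B) :
    n (x - y) ≤ n x + n y := by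
  simpa [sub_eq_add_neg, hn.map_neg hy] using hn.add_le x hx (-y) (B.neg_mem hy)

theorem inv_smul_of_pos (hn : IsSeminormOn B n) {c : ℝ} (hc : 0 < c) {x : E} (hx : x ∈ B) :
    n (c⁻¹ • x) = c⁻¹ * n x := by
  rw [hn.smul _ x hx, abs_of_pos (inv_pos.2 hc)]

theorem sum_le (hn : IsSeminormOn B n) {ι : Type*} (s : Finset ι) {f : ι → E}
    (hf : ∀ i ∈ s, f i ∈ B) : n (∑ i ∈ s, f i) ≤ ∑ i ∈ s, n (f i) := by
  classical
  induction s using Finset.induction_on with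
  | empty => simp [hn.map_zero]
  | insert a s ha ih =>
    rw [sum_insert ha, sum_insert ha]
    have hs : ∀ i ∈ s, f i ∈ B := fun i hi => hf i (mem_insert_of_mem hi)
    exact (hn.add_le _ (hf a (mem_insert_self a s)) _ (B.sum_mem hs)).trans
      (add_le_add le_rfl (ih hs))

variable {T : Module.End ℝ E}

theorem le_pow_apply_add_mul (hn : IsSeminormOn B n) (hT : ∀ x ∈ B, T x ∈ B) {C : ℝ}
    (hC : 0 ≤ C) (hTC : ∀ x ∈ B, n (T x) ≤ C * n x) (N : ℕ) {x : E} (hx : x ∈ B) :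
    n x ≤ n ((T ^ N) x) + (∑ i ∈ range N, C ^ i) * n (x - T x) := by
  have hd : x - T x ∈ B := B.sub_mem hx (hT x hx)
  have hpow : ∀ k, ∀ y ∈ B, (T ^ k) y ∈ B := fun k => Module.End.pow_apply_mem_of_forall_mem k hT
  calc n x = n ((T ^ N) x + ∑ i ∈ range N, (T ^ i) (x - T x)) := by
        rw [← LinearMap.sum_apply, Module.End.geom_sum_apply_sub_self_apply, add_sub_cancel]
    _ ≤ n ((T ^ N) x) + ∑ i ∈ range N, n ((T ^ i) (x - T x)) :=
        (hn.add_le _ (hpow N x hx) _ (B.sum_mem fun i _ => hpow i _ hd)).trans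
          (add_le_add le_rfl (hn.sum_le _ fun i _ => hpow i _ hd))
    _ ≤ n ((T ^ N) x) + ∑ i ∈ range N, C ^ i * n (x - T x) := by
        gcongr with i
        exact Module.End.pow_apply_le_of_forall_apply_le hT hC hTC i hd
    _ = n ((T ^ N) x) + (∑ i ∈ range N, C ^ i) * n (x - T x) := by rw [sum_mul]

theorem tendsto_zero_of_tendsto_sub_apply (hn : IsSeminormOn B n) {B' : Submodule ℝ E}
    (hB' : B' ≤ B) {n' : E → ℝ} (hT : ∀ x ∈ B, T x ∈ B) {C : ℝ} (hC : 0 ≤ C)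
    (hTC : ∀ x ∈ B, n (T x) ≤ C * n x) {m : E →ₗ[ℝ] ℝ} {a : ℕ → ℝ} (ha0 : ∀ N, 0 ≤ a N)
    (ha : Tendsto a atTop (𝓝 0)) (hmix : ∀ N, ∀ y ∈ B', m y = 0 → n ((T ^ N) y) ≤ a N * n' y)
    {ι : Type*} {l : Filter ι} {x : ι → E} {D : ℝ}
    (hx : ∀ᶠ i in l, x i ∈ B' ∧ m (x i) = 0 ∧ n' (x i) ≤ D)
    (hdef : Tendsto (fun i => n (x i - T (x i))) l (𝓝 0)) :
    Tendsto (fun i => n (x i)) l (𝓝 0) := by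
  refine tendsto_zero_of_forall_le_add (hx.mono fun i hi => hn.nonneg _ (hB' hi.1))
    (by simpa using ha.mul_const D)
    (fun N => by simpa using hdef.const_mul (∑ i ∈ range N, C ^ i)) fun N => ?_
  filter_upwards [hx] with i ⟨hxi, hmi, hDi⟩
  have hpow := (hmix N _ hxi hmi).trans (mul_le_mul_of_nonneg_left hDi (ha0 N))
  linarith [hn.le_pow_apply_add_mul hT hC hTC N (hB' hxi)]

theorem map_sub_resolvent_le (hn : IsSeminormOn B n) (hT : ∀ x ∈ B, T x ∈ B)
    {m : E →ₗ[ℝ] ℝ} (hTm : ∀ x, m (T x) = m x) {R : Module.End ℝ E} {C : ℝ}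
    (hRB : ∀ g ∈ B, m g = 0 → R g ∈ B) (hRC : ∀ g ∈ B, m g = 0 → n (R g) ≤ C * n g)
    (hRsum : ∀ g ∈ B, m g = 0 →
      Tendsto (fun N => n ((∑ i ∈ range N, T ^ i) g - R g)) atTop (𝓝 0))
    {x v : E} (hx : x ∈ B) (hv : v ∈ B) (hvm : m v = 0) {b : ℕ → ℝ}
    (hb : Tendsto b atTop (𝓝 0)) (hxb : ∀ N, n ((T ^ N) x) ≤ b N) :
    n (x - R v) ≤ C * n (x - T x - v) := by
  have hd : x - T x ∈ B := B.sub_mem hx (hT x hx)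
  have hdm : m (x - T x) = 0 := by rw [map_sub, hTm, sub_self]
  have hRd := hRB _ hd hdm
  have hRv := hRB _ hv hvm
  have hpowB (N : ℕ) : (T ^ N) x ∈ B := Module.End.pow_apply_mem_of_forall_mem N hT x hx
  have hpow := squeeze_zero (fun N => hn.nonneg _ (hpowB N)) hxb hb
  -- `x - R (x - T x) = Tᴺ x + ((∑ i < N, Tⁱ) (x - T x) - R (x - T x))` for every `N`
  have hres : n (x - R (x - T x)) ≤ 0 := by
    refine ge_of_tendsto' (add_zero (0 : ℝ) ▸ hpow.add (hRsum _ hd hdm)) fun N => ?_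
    have hsum : (∑ i ∈ range N, T ^ i) (x - T x) ∈ B := by
      rw [Module.End.geom_sum_apply_sub_self_apply]; exact B.sub_mem hx (hpowB N)
    refine le_of_eq_of_le ?_ (hn.add_le _ (hpowB N) _ (B.sub_mem hsum hRd))
    rw [Module.End.geom_sum_apply_sub_self_apply]
    abel_nf
  calc n (x - R v) = n ((x - R (x - T x)) + R (x - T x - v)) := by
        rw [map_sub R (x - T x) v]; abel_nf
    _ ≤ n (x - R (x - T x)) + n (R (x - T x - v)) :=
        hn.add_le _ (B.sub_mem hx hRd) _ (by rw [map_sub]; exact B.sub_mem hRd hRv)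
    _ ≤ C * n (x - T x - v) := by
        linarith [hRC _ (B.sub_mem hd hv) (by rw [map_sub, hdm, hvm, sub_self])]

theorem tendsto_inv_smul_sub_apply (hn : IsSeminormOn B n) {ns : E → ℝ} {K : ℝ}
    {l : Filter ℝ} {L : ℝ → E → E} {L0 : E → E} {x : ℝ → E} {x0 v : E} (hv : v ∈ B)
    (hB : ∀ᶠ δ in l, 0 < δ ∧ L δ (x δ) - L0 (x δ) ∈ B ∧ L δ x0 - L0 x0 ∈ B)
    (hlip : ∀ᶠ δ in l, n ((L0 (x δ) - L δ (x δ)) - (L0 x0 - L δ x0)) ≤ K * δ * ns (x δ - x0))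
    (hx : Tendsto (fun δ => ns (x δ - x0)) l (𝓝 0))
    (hderiv : Tendsto (fun δ => n (δ⁻¹ • (L δ x0 - L0 x0) - v)) l (𝓝 0)) :
    Tendsto (fun δ => n (δ⁻¹ • (L δ (x δ) - L0 (x δ)) - v)) l (𝓝 0) := by
  refine squeeze_zero' ?_ ?_ (by simpa using (hx.const_mul K).add hderiv)
  · filter_upwards [hB] with δ hδ
    exact hn.nonneg _ (B.sub_mem (B.smul_mem _ hδ.2.1) hv)
  filter_upwards [hB, hlip] with δ ⟨hδ, hxδ, hx0⟩ hlipδ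
  set a := L δ (x δ) - L0 (x δ)
  set b := L δ x0 - L0 x0
  have hab : n (a - b) ≤ K * δ * ns (x δ - x0) := by
    rwa [hn.map_sub_rev hxδ hx0, show b - a = (L0 (x δ) - L δ (x δ)) - (L0 x0 - L δ x0) by
      simp only [a, b]; abel]
  clear_value a b
  calc n (δ⁻¹ • a - v) = n (δ⁻¹ • (a - b) + (δ⁻¹ • b - v)) := by rw [smul_sub, sub_add_sub_cancel]
    _ ≤ δ⁻¹ * n (a - b) + n (δ⁻¹ • b - v) := by
        rw [← hn.inv_smul_of_pos hδ (B.sub_mem hxδ hx0)]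
        exact hn.add_le _ (B.smul_mem _ (B.sub_mem hxδ hx0)) _ (B.sub_mem (B.smul_mem _ hx0) hv)
    _ ≤ δ⁻¹ * (K * δ * ns (x δ - x0)) + n (δ⁻¹ • b - v) := by gcongr
    _ = K * ns (x δ - x0) + n (δ⁻¹ • b - v) := by field_simp

end IsSeminormOn

def MeasureTheory.VectorMeasure.totalMass (X : Type*) [MeasurableSpace X] :
    VectorMeasure X ℝ →ₗ[ℝ] ℝ where
  toFun μ := μ Set.univ
  map_add' _ _ := rfl
  map_smul' _ _ := rfl

@[simp]
theorem MeasureTheory.VectorMeasure.totalMass_apply {X : Type*} [MeasurableSpace X]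
    (μ : VectorMeasure X ℝ) : totalMass X μ = μ Set.univ :=
  rfl

theorem tendsto_seminorm_fixedPoint_sub {X : Type*} [MeasurableSpace X]
    {Bw Bs Bss : Submodule ℝ (VectorMeasure X ℝ)} (hBss : Bss ≤ Bs)
    {ns nss : VectorMeasure X ℝ → ℝ} (hs : IsSeminormOn Bs ns) (hss : IsSeminormOn Bss nss)
    {δbar : ℝ} (hδbar : 0 < δbar) {L : ℝ → VectorMeasure X ℝ → VectorMeasure X ℝ}
    (hLmaps : ∀ δ : ℝ, 0 ≤ δ → δ < δbar →
      Set.MapsTo (L δ) Bw Bw ∧ Set.MapsTo (L δ) Bs Bs ∧ Set.MapsTo (L δ) Bss Bss)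
    {L0 : VectorMeasure X ℝ →ₗ[ℝ] VectorMeasure X ℝ} (hL0 : ∀ μ, L 0 μ = L0 μ) {CL : ℝ}
    (hL0bdds : ∀ f ∈ Bs, ns (L0 f) ≤ CL * ns f) {hfix : ℝ → VectorMeasure X ℝ}
    (hhfix : ∀ δ : ℝ, 0 ≤ δ → δ < δbar →
      hfix δ ∈ Bss ∧ 0 ≤ hfix δ ∧ (hfix δ) Set.univ = (1:ℝ) ∧ L δ (hfix δ) = hfix δ)
    {M : ℝ} (hSS1 : ∀ δ : ℝ, 0 ≤ δ → δ < δbar → nss (hfix δ) ≤ M)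
    {aseq : ℕ → ℝ} (haseq0 : ∀ n, 0 ≤ aseq n) (haseq : Tendsto aseq atTop (𝓝 0))
    (hSS2 : ∀ n : ℕ, ∀ g ∈ Bss, g Set.univ = (0:ℝ) → ns ((L0 ^ n) g) ≤ aseq n * nss g)
    {K : ℝ} (hK0 : 0 ≤ K)
    (hSS3 : ∀ δ : ℝ, 0 ≤ δ → δ < δbar →
      ∀ x y : VectorMeasure X ℝ, x ∈ Bss → nss x ≤ 2 * M → y ∈ Bss → nss y ≤ 2 * M →
        ns ((L0 x - L δ x) - (L0 y - L δ y)) ≤ K * δ * nss (x - y))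
    (hSS3zero : ∀ δ : ℝ, 0 ≤ δ → δ < δbar → L0 (0 : VectorMeasure X ℝ) - L δ 0 = 0) :
    Tendsto (fun δ => ns (hfix δ - hfix 0)) (𝓝[Ioo 0 δbar] 0) (𝓝 0) := by
  obtain ⟨h0ss, -, h0mass, h0fix⟩ := hhfix 0 le_rfl hδbar
  have hM : nss (hfix 0) ≤ M := hSS1 0 le_rfl hδbar
  have hM0 : 0 ≤ M := (hss.nonneg _ h0ss).trans hM
  obtain ⟨-, hL0s, hL0ss⟩ : MapsTo L0 Bw Bw ∧ MapsTo L0 Bs Bs ∧ MapsTo L0 Bss Bss :=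
    funext hL0 ▸ hLmaps 0 le_rfl hδbar
  have hdefect (δ : ℝ) (hd : δ ∈ Ioo 0 δbar) :
      ns (hfix δ - hfix 0 - L0 (hfix δ - hfix 0)) ≤ K * δ * M := by
    obtain ⟨hm, -, -, hfixδ⟩ := hhfix δ hd.1.le hd.2
    have hMδ := hSS1 δ hd.1.le hd.2
    have hSS3δ := hSS3 δ hd.1.le hd.2 (hfix δ) 0 hm (by linarith) Bss.zero_mem
      (by rw [hss.map_zero]; linarith)
    rw [hSS3zero δ hd.1.le hd.2, sub_zero, sub_zero] at hSS3δ
    calc ns (hfix δ - hfix 0 - L0 (hfix δ - hfix 0)) = ns (L0 (hfix δ) - L δ (hfix δ)) := by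
          rw [map_sub, ← hL0 (hfix 0), h0fix, sub_sub_sub_cancel_right,
            hs.map_sub_rev (hBss hm) (hBss (hL0ss hm)), hfixδ]
      _ ≤ K * δ * M := hSS3δ.trans (mul_le_mul_of_nonneg_left hMδ (mul_nonneg hK0 hd.1.le))
  refine hs.tendsto_zero_of_tendsto_sub_apply hBss hL0s (le_max_right CL 0)
    (fun μ hμ => (hL0bdds μ hμ).trans (by gcongr; exacts [hs.nonneg μ hμ, le_max_left _ _]))
    (m := VectorMeasure.totalMass X) haseq0 haseq hSS2 (D := 2 * M)
    (eventually_nhdsWithin_of_forall fun δ hd => ?_) ?_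
  · obtain ⟨hm, -, hmass, -⟩ := hhfix δ hd.1.le hd.2
    exact ⟨Bss.sub_mem hm h0ss, by simp [sub_apply, hmass, h0mass],
      (hss.sub_le hm h0ss).trans (by linarith [hSS1 δ hd.1.le hd.2])⟩
  refine squeeze_zero' (eventually_nhdsWithin_of_forall fun δ hd => hs.nonneg _ ?_)
    (eventually_nhdsWithin_of_forall hdefect) ?_
  · obtain ⟨hm, -⟩ := hhfix δ hd.1.le hd.2
    exact hBss (Bss.sub_mem (Bss.sub_mem hm h0ss) (hL0ss (Bss.sub_mem hm h0ss)))
  refine tendsto_nhdsWithin_of_tendsto_nhds ?_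
  simpa using ((tendsto_id (x := 𝓝 (0 : ℝ))).const_mul K).mul_const M

theorem stmt_8_general
    {X : Type*} [MeasurableSpace X]
    -- the spaces `B_ss ⊆ B_s ⊆ B_w ⊆ SM(X)` with norms `nss ≥ ns ≥ nw`
    (Bw Bs Bss : Submodule ℝ (VectorMeasure X ℝ)) (hBsw : Bs ≤ Bw) (hBss : Bss ≤ Bs)
    (nw ns nss : VectorMeasure X ℝ → ℝ)
    (hnw0 : ∀ μ ∈ Bw, 0 ≤ nw μ)
    (hnw_add : ∀ μ ∈ Bw, ∀ ν ∈ Bw, nw (μ + ν) ≤ nw μ + nw ν)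
    (hnw_smul : ∀ (c : ℝ), ∀ μ ∈ Bw, nw (c • μ) = |c| * nw μ)
    (hns0 : ∀ μ ∈ Bs, 0 ≤ ns μ)
    (hns_add : ∀ μ ∈ Bs, ∀ ν ∈ Bs, ns (μ + ν) ≤ ns μ + ns ν)
    (hns_smul : ∀ (c : ℝ), ∀ μ ∈ Bs, ns (c • μ) = |c| * ns μ)
    (hnss0 : ∀ μ ∈ Bss, 0 ≤ nss μ)
    (hnss_add : ∀ μ ∈ Bss, ∀ ν ∈ Bss, nss (μ + ν) ≤ nss μ + nss ν)
    (hnss_smul : ∀ (c : ℝ), ∀ μ ∈ Bss, nss (c • μ) = |c| * nss μ)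
    (hsw : ∀ μ ∈ Bs, nw μ ≤ ns μ) (hsss : ∀ μ ∈ Bss, ns μ ≤ nss μ)
    -- the family of nonlinear Markov operators `𝓛_δ`, `δ ∈ [0, δ̄)`
    (δbar : ℝ) (hδbar : 0 < δbar)
    (L : ℝ → VectorMeasure X ℝ → VectorMeasure X ℝ)
    (hMarkov : ∀ δ : ℝ, 0 ≤ δ → δ < δbar →
      (∀ μ : VectorMeasure X ℝ, 0 ≤ μ → 0 ≤ L δ μ) ∧
      (∀ μ : VectorMeasure X ℝ, (L δ μ) Set.univ = μ Set.univ))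
    (hLmaps : ∀ δ : ℝ, 0 ≤ δ → δ < δbar →
      Set.MapsTo (L δ) Bw Bw ∧ Set.MapsTo (L δ) Bs Bs ∧ Set.MapsTo (L δ) Bss Bss)
    -- `𝓛₀` is linear and bounded on each `B_i`, `i ∈ {w, s, ss}`
    (L0 : VectorMeasure X ℝ →ₗ[ℝ] VectorMeasure X ℝ) (hL0 : ∀ μ, L 0 μ = L0 μ)
    (CL : ℝ)
    (hL0bdds : ∀ f ∈ Bs, ns (L0 f) ≤ CL * ns f)
    -- for each `δ` a fixed probability measure `h_δ ∈ B_ss` of `𝓛_δ`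
    (hfix : ℝ → VectorMeasure X ℝ)
    (hhfix : ∀ δ : ℝ, 0 ≤ δ → δ < δbar →
      hfix δ ∈ Bss ∧ 0 ≤ hfix δ ∧ (hfix δ) Set.univ = (1:ℝ) ∧ L δ (hfix δ) = hfix δ)
    -- (SS1)
    (M : ℝ) (hSS1 : ∀ δ : ℝ, 0 ≤ δ → δ < δbar → nss (hfix δ) ≤ M)
    -- (SS2)
    (aseq : ℕ → ℝ) (haseq0 : ∀ n, 0 ≤ aseq n) (haseq : Tendsto aseq atTop (nhds 0))
    (hSS2 : ∀ n : ℕ, ∀ g ∈ Bss, g Set.univ = (0:ℝ) → ns ((L0 ^ n) g) ≤ aseq n * nss g)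
    -- (SS3)
    (K : ℝ) (hK0 : 0 ≤ K)
    (hSS3 : ∀ δ : ℝ, 0 ≤ δ → δ < δbar →
      ∀ x y : VectorMeasure X ℝ, x ∈ Bss → nss x ≤ 2 * M → y ∈ Bss → nss y ≤ 2 * M →
        ns ((L0 x - L δ x) - (L0 y - L δ y)) ≤ K * δ * nss (x - y))
    (hSS3zero : ∀ δ : ℝ, 0 ≤ δ → δ < δbar → L0 (0 : VectorMeasure X ℝ) - L δ 0 = 0)
    -- (LR1): the resolvent `(Id − 𝓛₀)⁻¹ = Σ_i 𝓛₀ⁱ` is bounded `V_w → V_w`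
    (Res : VectorMeasure X ℝ →ₗ[ℝ] VectorMeasure X ℝ)
    (hResMaps : ∀ g ∈ Bw, g Set.univ = (0:ℝ) → Res g ∈ Bw ∧ (Res g) Set.univ = (0:ℝ))
    (CR : ℝ) (hResBdd : ∀ g ∈ Bw, g Set.univ = (0:ℝ) → nw (Res g) ≤ CR * nw g)
    (hResSeries : ∀ g ∈ Bw, g Set.univ = (0:ℝ) →
      Tendsto (fun N : ℕ => nw ((∑ i ∈ Finset.range N, L0 ^ i) g - Res g))
        atTop (nhds 0))
    -- (LR2): `𝓛₀ − 𝓛_δ` is `Kδ`-Lipschitz from `(B̄_{2M}, ‖·‖_s)` to `(B_w, ‖·‖_w)`,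
    -- and the derivative operator `𝓛̇ h₀ ∈ V_w` exists
    (K' : ℝ)
    (hLR2 : ∀ δ : ℝ, 0 ≤ δ → δ < δbar →
      ∀ x y : VectorMeasure X ℝ, x ∈ Bs → ns x ≤ 2 * M → y ∈ Bs → ns y ≤ 2 * M →
        nw ((L0 x - L δ x) - (L0 y - L δ y)) ≤ K' * δ * ns (x - y))
    (Ldot : VectorMeasure X ℝ)
    (hLdotVw : Ldot ∈ Bw ∧ Ldot Set.univ = (0:ℝ))
    (hLdot : Tendsto (fun δ : ℝ => nw (δ⁻¹ • (L δ (hfix 0) - L0 (hfix 0)) - Ldot))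
      (nhdsWithin 0 (Set.Ioo 0 δbar)) (nhds 0)) :
    -- the linear response formula
    Tendsto (fun δ : ℝ => nw (δ⁻¹ • (hfix δ - hfix 0) - Res Ldot))
      (nhdsWithin 0 (Set.Ioo 0 δbar)) (nhds 0) := by
  have hw : IsSeminormOn Bw nw := ⟨hnw0, hnw_add, hnw_smul⟩
  have hs : IsSeminormOn Bs ns := ⟨hns0, hns_add, hns_smul⟩
  have hss : IsSeminormOn Bss nss := ⟨hnss0, hnss_add, hnss_smul⟩
  have hstab := tendsto_seminorm_fixedPoint_sub hBss hs hss hδbar hLmaps hL0 hL0bdds hhfix hSS1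
    haseq0 haseq hSS2 hK0 hSS3 hSS3zero
  obtain ⟨h0ss, -, h0mass, h0fix⟩ := hhfix 0 le_rfl hδbar
  obtain ⟨hL0w, -, hL0ss⟩ : MapsTo L0 Bw Bw ∧ MapsTo L0 Bs Bs ∧ MapsTo L0 Bss Bss :=
    funext hL0 ▸ hLmaps 0 le_rfl hδbar
  have hL0mass (μ : VectorMeasure X ℝ) :
      VectorMeasure.totalMass X (L0 μ) = VectorMeasure.totalMass X μ :=
    hL0 μ ▸ (hMarkov 0 le_rfl hδbar).2 μ
  have hderiv : Tendsto (fun δ => nw (δ⁻¹ • (L δ (hfix δ) - L0 (hfix δ)) - Ldot))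
      (𝓝[Ioo 0 δbar] 0) (𝓝 0) := by
    have h2M (δ : ℝ) (h0 : 0 ≤ δ) (h1 : δ < δbar) : hfix δ ∈ Bs ∧ ns (hfix δ) ≤ 2 * M :=
      ⟨hBss (hhfix δ h0 h1).1, (hsss _ (hhfix δ h0 h1).1).trans
        (by linarith [hSS1 δ h0 h1, hnss0 _ h0ss, hSS1 0 le_rfl hδbar])⟩
    refine hw.tendsto_inv_smul_sub_apply (K := K') hLdotVw.1
      (eventually_nhdsWithin_of_forall fun δ hd => ⟨hd.1, ?_⟩)
      (eventually_nhdsWithin_of_forall fun δ hd => hLR2 δ hd.1.le hd.2 _ _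
        (h2M δ hd.1.le hd.2).1 (h2M δ hd.1.le hd.2).2 (h2M 0 le_rfl hδbar).1
        (h2M 0 le_rfl hδbar).2) hstab hLdot
    have hLδ := (hLmaps δ hd.1.le hd.2).1
    have hm := hBsw (h2M δ hd.1.le hd.2).1
    have h0w := hBsw (hBss h0ss)
    exact ⟨Bw.sub_mem (hLδ hm) (hL0w hm), Bw.sub_mem (hLδ h0w) (hL0w h0w)⟩
  refine squeeze_zero' (eventually_nhdsWithin_of_forall fun δ hd => hnw0 _ ?_)
    (eventually_nhdsWithin_of_forall fun δ hd => ?_) (by simpa using hderiv.const_mul CR) <;>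
    obtain ⟨hm, -, hmass, hfixδ⟩ := hhfix δ hd.1.le hd.2
  · exact Bw.sub_mem (Bw.smul_mem _ (hBsw (hBss (Bss.sub_mem hm h0ss))))
      (hResMaps _ hLdotVw.1 hLdotVw.2).1
  have hgss : δ⁻¹ • (hfix δ - hfix 0) ∈ Bss := Bss.smul_mem _ (Bss.sub_mem hm h0ss)
  have hgL : δ⁻¹ • (L δ (hfix δ) - L0 (hfix δ)) =
      δ⁻¹ • (hfix δ - hfix 0) - L0 (δ⁻¹ • (hfix δ - hfix 0)) := by
    rw [map_smul, map_sub, ← hL0 (hfix 0), h0fix, hfixδ, smul_sub, smul_sub, smul_sub]; abel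
  rw [hgL]
  exact hw.map_sub_resolvent_le hL0w hL0mass (fun g hg hgm => (hResMaps g hg hgm).1) hResBdd
    hResSeries (hBsw (hBss hgss)) hLdotVw.1 hLdotVw.2 (by simpa using haseq.mul_const _)
    fun N => (hsw _ (hBss (Module.End.pow_apply_mem_of_forall_mem N (fun _ hμ => hL0ss hμ) _
      hgss))).trans (hSS2 N _ hgss (by simp [sub_apply, hmass, h0mass]))

/-- Theorem `thm:linresp` of the paper: linear response for fixed points of
a family of nonlinear Markov operators `𝓛_δ` perturbing a linear Markov operator `𝓛₀`. -/
theorem stmt_8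
    {X : Type*} [MeasurableSpace X] [MetricSpace X] [CompactSpace X] [BorelSpace X]
    -- the spaces `B_ss ⊆ B_s ⊆ B_w ⊆ SM(X)` with norms `nss ≥ ns ≥ nw`
    (Bw Bs Bss : Submodule ℝ (VectorMeasure X ℝ)) (hBsw : Bs ≤ Bw) (hBss : Bss ≤ Bs)
    (nw ns nss : VectorMeasure X ℝ → ℝ)
    (hnw0 : ∀ μ ∈ Bw, 0 ≤ nw μ)
    (hnw_add : ∀ μ ∈ Bw, ∀ ν ∈ Bw, nw (μ + ν) ≤ nw μ + nw ν)
    (hnw_smul : ∀ (c : ℝ), ∀ μ ∈ Bw, nw (c • μ) = |c| * nw μ)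
    (hns0 : ∀ μ ∈ Bs, 0 ≤ ns μ)
    (hns_add : ∀ μ ∈ Bs, ∀ ν ∈ Bs, ns (μ + ν) ≤ ns μ + ns ν)
    (hns_smul : ∀ (c : ℝ), ∀ μ ∈ Bs, ns (c • μ) = |c| * ns μ)
    (hnss0 : ∀ μ ∈ Bss, 0 ≤ nss μ)
    (hnss_add : ∀ μ ∈ Bss, ∀ ν ∈ Bss, nss (μ + ν) ≤ nss μ + nss ν)
    (hnss_smul : ∀ (c : ℝ), ∀ μ ∈ Bss, nss (c • μ) = |c| * nss μ)
    (hsw : ∀ μ ∈ Bs, nw μ ≤ ns μ) (hsss : ∀ μ ∈ Bss, ns μ ≤ nss μ)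
    -- the linear form `μ ↦ μ(X)` is continuous on `B_w` (hence on each `B_i`)
    (Cm : ℝ) (hmass : ∀ μ ∈ Bw, |μ Set.univ| ≤ Cm * nw μ)
    -- the family of nonlinear Markov operators `𝓛_δ`, `δ ∈ [0, δ̄)`
    (δbar : ℝ) (hδbar : 0 < δbar)
    (L : ℝ → VectorMeasure X ℝ → VectorMeasure X ℝ)
    (hMarkov : ∀ δ : ℝ, 0 ≤ δ → δ < δbar →
      (∀ μ : VectorMeasure X ℝ, 0 ≤ μ → 0 ≤ L δ μ) ∧
      (∀ μ : VectorMeasure X ℝ, (L δ μ) Set.univ = μ Set.univ))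
    (hLmaps : ∀ δ : ℝ, 0 ≤ δ → δ < δbar →
      Set.MapsTo (L δ) Bw Bw ∧ Set.MapsTo (L δ) Bs Bs ∧ Set.MapsTo (L δ) Bss Bss)
    -- `𝓛₀` is linear and bounded on each `B_i`, `i ∈ {w, s, ss}`
    (L0 : VectorMeasure X ℝ →ₗ[ℝ] VectorMeasure X ℝ) (hL0 : ∀ μ, L 0 μ = L0 μ)
    (CL : ℝ)
    (hL0bddw : ∀ f ∈ Bw, nw (L0 f) ≤ CL * nw f)
    (hL0bdds : ∀ f ∈ Bs, ns (L0 f) ≤ CL * ns f)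
    (hL0bddss : ∀ f ∈ Bss, nss (L0 f) ≤ CL * nss f)
    -- for each `δ` a fixed probability measure `h_δ ∈ B_ss` of `𝓛_δ`
    (hfix : ℝ → VectorMeasure X ℝ)
    (hhfix : ∀ δ : ℝ, 0 ≤ δ → δ < δbar →
      hfix δ ∈ Bss ∧ 0 ≤ hfix δ ∧ (hfix δ) Set.univ = (1:ℝ) ∧ L δ (hfix δ) = hfix δ)
    -- (SS1)
    (M : ℝ) (hSS1 : ∀ δ : ℝ, 0 ≤ δ → δ < δbar → nss (hfix δ) ≤ M)
    -- (SS2)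
    (aseq : ℕ → ℝ) (haseq0 : ∀ n, 0 ≤ aseq n) (haseq : Tendsto aseq atTop (nhds 0))
    (hSS2 : ∀ n : ℕ, ∀ g ∈ Bss, g Set.univ = (0:ℝ) → ns ((L0 ^ n) g) ≤ aseq n * nss g)
    -- (SS3)
    (K : ℝ) (hK0 : 0 ≤ K)
    (hSS3 : ∀ δ : ℝ, 0 ≤ δ → δ < δbar →
      ∀ x y : VectorMeasure X ℝ, x ∈ Bss → nss x ≤ 2 * M → y ∈ Bss → nss y ≤ 2 * M →
        ns ((L0 x - L δ x) - (L0 y - L δ y)) ≤ K * δ * nss (x - y))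
    (hSS3zero : ∀ δ : ℝ, 0 ≤ δ → δ < δbar → L0 (0 : VectorMeasure X ℝ) - L δ 0 = 0)
    -- (LR1): the resolvent `(Id − 𝓛₀)⁻¹ = Σ_i 𝓛₀ⁱ` is bounded `V_w → V_w`
    (Res : VectorMeasure X ℝ →ₗ[ℝ] VectorMeasure X ℝ)
    (hResMaps : ∀ g ∈ Bw, g Set.univ = (0:ℝ) → Res g ∈ Bw ∧ (Res g) Set.univ = (0:ℝ))
    (CR : ℝ) (hResBdd : ∀ g ∈ Bw, g Set.univ = (0:ℝ) → nw (Res g) ≤ CR * nw g)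
    (hResSeries : ∀ g ∈ Bw, g Set.univ = (0:ℝ) →
      Tendsto (fun N : ℕ => nw ((∑ i ∈ Finset.range N, L0 ^ i) g - Res g))
        atTop (nhds 0))
    -- (LR2): `𝓛₀ − 𝓛_δ` is `Kδ`-Lipschitz from `(B̄_{2M}, ‖·‖_s)` to `(B_w, ‖·‖_w)`,
    -- and the derivative operator `𝓛̇ h₀ ∈ V_w` exists
    (K' : ℝ) (hK'0 : 0 ≤ K')
    (hLR2 : ∀ δ : ℝ, 0 ≤ δ → δ < δbar →
      ∀ x y : VectorMeasure X ℝ, x ∈ Bs → ns x ≤ 2 * M → y ∈ Bs → ns y ≤ 2 * M →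
        nw ((L0 x - L δ x) - (L0 y - L δ y)) ≤ K' * δ * ns (x - y))
    (Ldot : VectorMeasure X ℝ)
    (hLdotVw : Ldot ∈ Bw ∧ Ldot Set.univ = (0:ℝ))
    (hLdot : Tendsto (fun δ : ℝ => nw (δ⁻¹ • (L δ (hfix 0) - L0 (hfix 0)) - Ldot))
      (nhdsWithin 0 (Set.Ioo 0 δbar)) (nhds 0)) :
    -- the linear response formula
    Tendsto (fun δ : ℝ => nw (δ⁻¹ • (hfix δ - hfix 0) - Res Ldot))
      (nhdsWithin 0 (Set.Ioo 0 δbar)) (nhds 0) :=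
  stmt_8_general Bw Bs Bss hBsw hBss nw ns nss hnw0 hnw_add hnw_smul hns0 hns_add hns_smul hnss0
    hnss_add hnss_smul hsw hsss δbar hδbar L hMarkov hLmaps L0 hL0 CL hL0bdds hfix hhfix M hSS1 aseq
    haseq0 haseq hSS2 K hK0 hSS3 hSS3zero Res hResMaps CR hResBdd hResSeries K' hLR2 Ldot hLdotVw
    hLdot
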